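/- arXiv:1507.02523 — 7 statements merged into one kernel-verified Lean document; each statement's English description precedes it below -/
import Mathlib

section
/- Let V be an n-dimensional real inner product space, W a p-dimensional real inner product space, and α : V × V → W a symmetric bilinear form such that K_α(X,Y) = ⟨α(X,X), α(Y,Y)⟩ − ‖α(X,Y)‖² ≤ 0 for all linearly independent X, Y ∈ V. Then every subspace S ⊆ V with dim S > p contains a nonzero vector X with α(X,X) = 0. -/
open scoped RealInnerProductSpace
open Filter Topology Module

lemma poly_aux (c₁ c₂ c₃ c₄ : ℝ)
    (h : ∀ s : ℝ, 0 ≤ c₁*s + c₂*s^2 + c₃*s^3 + c₄*s^4) : c₁ = 0 ∧ 0 ≤ c₂ := by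
  have hg : Continuous fun s : ℝ => c₁ + c₂*s + c₃*s^2 + c₄*s^3 := by continuity
  have hpos : c₁ ≥ 0 := by
    have ht : Tendsto (fun s : ℝ => c₁ + c₂*s + c₃*s^2 + c₄*s^3) (𝓝[>] (0:ℝ)) (𝓝 c₁) := by
      simpa using ((hg.tendsto 0).mono_left (nhdsWithin_le_nhds (s := Set.Ioi (0:ℝ))))
    refine ge_of_tendsto ht ?_
    filter_upwards [self_mem_nhdsWithin] with s hs
    have hs' : (0:ℝ) < s := hs
    nlinarith [h s, mul_pos hs' hs']
  have hneg : c₁ ≤ 0 := by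
    have ht : Tendsto (fun s : ℝ => c₁ + c₂*s + c₃*s^2 + c₄*s^3) (𝓝[<] (0:ℝ)) (𝓝 c₁) := by
      simpa using ((hg.tendsto 0).mono_left (nhdsWithin_le_nhds (s := Set.Iio (0:ℝ))))
    refine le_of_tendsto ht ?_
    filter_upwards [self_mem_nhdsWithin] with s hs
    have hs' : s < (0:ℝ) := hs
    nlinarith [h s, mul_pos_of_neg_of_neg hs' hs']
  have hc1 : c₁ = 0 := le_antisymm hneg hpos
  refine ⟨hc1, ?_⟩
  have hg2 : Continuous fun s : ℝ => c₂ + c₃*s + c₄*s^2 := by continuity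
  have ht : Tendsto (fun s : ℝ => c₂ + c₃*s + c₄*s^2) (𝓝[>] (0:ℝ)) (𝓝 c₂) := by
    simpa using ((hg2.tendsto 0).mono_left (nhdsWithin_le_nhds (s := Set.Ioi (0:ℝ))))
  refine ge_of_tendsto ht ?_
  filter_upwards [self_mem_nhdsWithin] with s hs
  have hs' : (0:ℝ) < s := hs
  have h2 := h s
  rw [hc1] at h2
  nlinarith [h2, mul_pos hs' hs', mul_pos (mul_pos hs' hs') hs']

/-- If `α : V × V → W` is a symmetric bilinear form with nonpositive extrinsic curvature,
i.e. `K_α(X,Y) = ⟪α(X,X), α(Y,Y)⟫ − ‖α(X,Y)‖² ≤ 0` for all linearly independent `X, Y`,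
then every subspace `S ⊆ V` with `dim S > p = dim W` contains a nonzero asymptotic vector
of `α`, i.e. a nonzero `X` with `α(X,X) = 0`. -/
theorem asymptotic_vector_exists
    {V W : Type*} [NormedAddCommGroup V] [InnerProductSpace ℝ V]
    [NormedAddCommGroup W] [InnerProductSpace ℝ W]
    [FiniteDimensional ℝ V] [FiniteDimensional ℝ W]
    (n p : ℕ) (hn : Module.finrank ℝ V = n) (hp : Module.finrank ℝ W = p)
    (α : V →ₗ[ℝ] V →ₗ[ℝ] W) (hsymm : ∀ X Y : V, α X Y = α Y X)
    (hK : ∀ X Y : V, LinearIndependent ℝ ![X, Y] →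
      ⟪α X X, α Y Y⟫ - ‖α X Y‖ ^ 2 ≤ 0)
    (S : Submodule ℝ V) (hS : p < Module.finrank ℝ S) :
    ∃ X ∈ S, X ≠ 0 ∧ α X X = 0 := by
  classical
  -- S contains a unit vector
  have hSne : ∃ v ∈ S, v ≠ (0:V) := by
    rw [← Submodule.ne_bot_iff]
    intro hbot
    rw [hbot] at hS
    simp at hS
  obtain ⟨v, hvS, hv0⟩ := hSne
  have hx1 : ‖(‖v‖⁻¹ • v)‖ = 1 := norm_smul_inv_norm hv0
  -- the compact set: unit sphere of S
  have hKcomp : IsCompact (Metric.sphere (0:V) 1 ∩ (S : Set V)) :=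
    (isCompact_sphere 0 1).inter_right S.closed_of_finiteDimensional
  have hKne : (Metric.sphere (0:V) 1 ∩ (S : Set V)).Nonempty :=
    ⟨‖v‖⁻¹ • v, by simpa [mem_sphere_zero_iff_norm] using hx1, S.smul_mem _ hvS⟩
  -- continuity of x ↦ α x x
  have hcont : Continuous fun x : V => α x x := by
    let A : V →ₗ[ℝ] (V →L[ℝ] W) :=
      { toFun := fun x => LinearMap.toContinuousLinearMap (α x)
        map_add' := by intro x y; ext z; simp
        map_smul' := by intro r x; ext z; simp }
    have hA : Continuous A := A.continuous_of_finiteDimensional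
    have : Continuous fun x : V => (A x) x := hA.clm_apply continuous_id
    simpa [A] using this
  obtain ⟨X₀, hX₀K, hmin'⟩ := hKcomp.exists_isMinOn hKne (hcont.norm.continuousOn)
  have hX₀S : X₀ ∈ S := hX₀K.2
  have hX₀1 : ‖X₀‖ = 1 := by simpa [mem_sphere_zero_iff_norm] using hX₀K.1
  have hX₀ne : X₀ ≠ 0 := by intro h; rw [h] at hX₀1; simp at hX₀1
  have hmin : ∀ x : V, x ∈ S → ‖x‖ = 1 → ‖α X₀ X₀‖ ≤ ‖α x x‖ := by
    intro x hxS hx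
    exact hmin' ⟨by simpa [mem_sphere_zero_iff_norm] using hx, hxS⟩
  set a := α X₀ X₀ with ha_def
  by_cases ha : a = 0
  · exact ⟨X₀, hX₀S, hX₀ne, ha⟩
  -- key step: for unit Y ∈ S orthogonal to X₀, α X₀ Y ⊥ a and α X₀ Y ≠ 0
  have key : ∀ Y : V, Y ∈ S → ⟪X₀, Y⟫ = 0 → ‖Y‖ = 1 →
      ⟪a, α X₀ Y⟫ = 0 ∧ α X₀ Y ≠ 0 := by
    intro Y hYS hYo hY1
    set b := α X₀ Y with hb_def
    set c := α Y Y with hc_def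
    -- minimality inequality along the normalized line X₀ + s Y
    have hineq : ∀ s : ℝ, (1+s^2)^2 * ‖a‖^2 ≤ ‖a + (2*s)•b + (s^2)•c‖^2 := by
      intro s
      have hZsq : ‖X₀ + s•Y‖^2 = 1 + s^2 := by
        rw [norm_add_sq_real, inner_smul_right, hYo, norm_smul, hX₀1, hY1]
        simp [sq_abs]
      have hZpos : (0:ℝ) < 1 + s^2 := by positivity
      have hZ : ‖X₀ + s•Y‖ = Real.sqrt (1+s^2) := by
        rw [← Real.sqrt_sq (norm_nonneg _), hZsq]
      have hZne : ‖X₀ + s•Y‖ ≠ 0 := by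
        rw [hZ]; positivity
      set x : V := ‖X₀ + s•Y‖⁻¹ • (X₀ + s•Y) with hx_def
      have hxS : x ∈ S := S.smul_mem _ (S.add_mem hX₀S (S.smul_mem _ hYS))
      have hxn : ‖x‖ = 1 := by
        rw [hx_def, norm_smul, norm_inv, norm_norm]
        field_simp
      have h1 := hmin x hxS hxn
      have hxa : α x x = (‖X₀ + s•Y‖^2)⁻¹ • α (X₀ + s•Y) (X₀ + s•Y) := by
        rw [hx_def]
        simp [map_smul, smul_smul]
        ring_nf
      have hexpand : α (X₀ + s•Y) (X₀ + s•Y) = a + (2*s)•b + (s^2)•c := by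
        simp only [map_add, map_smul, LinearMap.add_apply, LinearMap.smul_apply]
        rw [hsymm Y X₀]
        rw [← hb_def, ← hc_def, ← ha_def]
        module
      have h2 : ‖α x x‖ = (1+s^2)⁻¹ * ‖α (X₀ + s•Y) (X₀ + s•Y)‖ := by
        rw [hxa, norm_smul, hZsq]
        simp [abs_of_pos hZpos]
      rw [h2, hexpand] at h1
      have h3 : (1+s^2) * ‖a‖ ≤ ‖a + (2*s)•b + (s^2)•c‖ := by
        have h4 := mul_le_mul_of_nonneg_left h1 hZpos.le
        rwa [← mul_assoc, mul_inv_cancel₀ (ne_of_gt hZpos), one_mul] at h4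
      have h5 := mul_self_le_mul_self (by positivity : (0:ℝ) ≤ (1+s^2) * ‖a‖) h3
      nlinarith [h5]
    -- expand the norm into a polynomial
    have hexp : ∀ s : ℝ, ‖a + (2*s)•b + (s^2)•c‖^2 =
        ‖a‖^2 + (4*⟪a,b⟫)*s + (4*‖b‖^2 + 2*⟪a,c⟫)*s^2 + (4*⟪b,c⟫)*s^3 + ‖c‖^2*s^4 := by
      intro s
      rw [← real_inner_self_eq_norm_sq]
      simp only [inner_add_left, inner_add_right, real_inner_smul_left, real_inner_smul_right,
        real_inner_self_eq_norm_sq, norm_smul, mul_pow, sq_abs, Real.norm_eq_abs]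
      rw [real_inner_comm b a, real_inner_comm c a, real_inner_comm c b]
      ring
    have hP : ∀ s : ℝ, 0 ≤ (4*⟪a,b⟫)*s + (4*‖b‖^2 + 2*⟪a,c⟫ - 2*‖a‖^2)*s^2
        + (4*⟪b,c⟫)*s^3 + (‖c‖^2 - ‖a‖^2)*s^4 := by
      intro s
      have := hineq s
      rw [hexp s] at this
      nlinarith [this]
    obtain ⟨hc1, hc2⟩ := poly_aux _ _ _ _ hP
    have hab : ⟪a,b⟫ = 0 := by linarith
    -- linear independence of X₀, Y
    have hli : LinearIndependent ℝ ![X₀, Y] := by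
      rw [LinearIndependent.pair_iff]
      intro s t hst
      have h1 : ⟪X₀, s•X₀ + t•Y⟫ = 0 := by rw [hst, inner_zero_right]
      rw [inner_add_right, real_inner_smul_right, real_inner_smul_right, hYo,
        real_inner_self_eq_norm_sq, hX₀1] at h1
      have hs0 : s = 0 := by simpa using h1
      subst hs0
      simp only [zero_smul, zero_add] at hst
      have hY0 : Y ≠ 0 := by intro h; rw [h] at hY1; simp at hY1
      rcases smul_eq_zero.mp hst with h | h
      · exact ⟨rfl, h⟩
      · exact absurd h hY0
    have hKc := hK X₀ Y hli
    rw [← ha_def, ← hb_def, ← hc_def] at hKc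
    -- conclude ‖a‖² ≤ 3‖b‖²
    have h3b : ‖a‖^2 ≤ 3*‖b‖^2 := by linarith
    have hbne : b ≠ 0 := by
      intro h
      have hb0 : ‖b‖ = 0 := by rw [h, norm_zero]
      have hle : ‖a‖^2 ≤ 0 := by rw [hb0] at h3b; linarith
      have h0 : ‖a‖^2 = 0 := le_antisymm hle (sq_nonneg _)
      have h0' : ‖a‖ = 0 := sq_eq_zero_iff.mp h0
      exact ha (norm_eq_zero.mp h0')
    exact ⟨hab, hbne⟩
  -- extend key to non-normalized Y
  have key' : ∀ Y : V, Y ∈ S → ⟪X₀, Y⟫ = 0 → Y ≠ 0 →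
      ⟪a, α X₀ Y⟫ = 0 ∧ α X₀ Y ≠ 0 := by
    intro Y hYS hYo hY0
    have hYn : ‖Y‖ ≠ 0 := norm_ne_zero_iff.mpr hY0
    have h1 : ‖(‖Y‖⁻¹ • Y)‖ = 1 := by rw [norm_smul, norm_inv, norm_norm]; field_simp
    have h2 : ⟪X₀, ‖Y‖⁻¹ • Y⟫ = 0 := by rw [real_inner_smul_right, hYo]; ring
    obtain ⟨hk1, hk2⟩ := key _ (S.smul_mem _ hYS) h2 h1
    rw [map_smul] at hk1 hk2
    constructor
    · rw [real_inner_smul_right] at hk1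
      rcases mul_eq_zero.mp hk1 with h | h
      · exact absurd h (inv_ne_zero hYn)
      · exact h
    · intro h
      rw [h, smul_zero] at hk2
      exact hk2 rfl
  -- dimension count
  set T := (ℝ ∙ X₀)ᗮ with hT_def
  set U := S ⊓ T with hU_def
  have hUle : Module.finrank ℝ U ≤ Module.finrank ℝ ((ℝ ∙ a)ᗮ : Submodule ℝ W) := by
    set M := (α X₀).domRestrict U with hM_def
    have hinj : Function.Injective M := by
      rw [← LinearMap.ker_eq_bot]
      rw [Submodule.eq_bot_iff]
      rintro ⟨Y, hY⟩ hker
      have hYS : Y ∈ S := hY.1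
      have hYo : ⟪X₀, Y⟫ = 0 :=
        Submodule.mem_orthogonal_singleton_iff_inner_right.mp hY.2
      have hMY : α X₀ Y = 0 := hker
      ext
      by_contra hY0
      exact (key' Y hYS hYo hY0).2 hMY
    have hrange : LinearMap.range M ≤ (ℝ ∙ a)ᗮ := by
      rintro _ ⟨⟨Y, hY⟩, rfl⟩
      have hYS : Y ∈ S := hY.1
      have hYo : ⟪X₀, Y⟫ = 0 :=
        Submodule.mem_orthogonal_singleton_iff_inner_right.mp hY.2
      rw [Submodule.mem_orthogonal_singleton_iff_inner_right]
      by_cases hY0 : Y = 0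
      · subst hY0; simp [M]
      · simpa [M] using (key' Y hYS hYo hY0).1
    calc Module.finrank ℝ U = Module.finrank ℝ (LinearMap.range M) :=
          (LinearMap.finrank_range_of_inj hinj).symm
      _ ≤ _ := Submodule.finrank_mono hrange
  have e1 : finrank ℝ ↥(S ⊔ T) + finrank ℝ ↥(S ⊓ T) = finrank ℝ S + finrank ℝ T :=
    Submodule.finrank_sup_add_finrank_inf_eq S T
  have e2 : finrank ℝ (ℝ ∙ X₀) + finrank ℝ T = n := by
    rw [hT_def, Submodule.finrank_add_finrank_orthogonal, hn]
  have e3 : finrank ℝ (ℝ ∙ X₀) = 1 := finrank_span_singleton hX₀ne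
  have e4 : finrank ℝ ↥(S ⊔ T) ≤ n := hn ▸ Submodule.finrank_le _
  have e5 : finrank ℝ (ℝ ∙ a) + finrank ℝ ((ℝ ∙ a)ᗮ : Submodule ℝ W) = p := by
    rw [Submodule.finrank_add_finrank_orthogonal, hp]
  have e6 : finrank ℝ (ℝ ∙ a) = 1 := finrank_span_singleton ha
  rw [hU_def] at hUle
  omega
end

section
/- Let V be an n-dimensional real inner product space, W a p-dimensional real inner product space, and α : V × V → W a symmetric bilinear form with K_α(X,Y) = ⟨α(X,X), α(Y,Y)⟩ − ‖α(X,Y)‖² < 0 for all linearly independent X, Y ∈ V. Then p ≥ n − 1. -/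
open scoped RealInnerProductSpace

set_option maxHeartbeats 2000000 in
/-- If `α : V × V → W` is a symmetric bilinear form with everywhere negative extrinsic
curvature, i.e. `K_α(X,Y) = ⟪α(X,X), α(Y,Y)⟫ − ‖α(X,Y)‖² < 0` for all linearly
independent `X, Y ∈ V`, then `p ≥ n − 1` where `n = dim V`, `p = dim W`. -/
theorem codim_ge_of_negative_extrinsic_curvature
    {V W : Type*} [NormedAddCommGroup V] [InnerProductSpace ℝ V]
    [NormedAddCommGroup W] [InnerProductSpace ℝ W]
    [FiniteDimensional ℝ V] [FiniteDimensional ℝ W]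
    (n p : ℕ) (hn : Module.finrank ℝ V = n) (hp : Module.finrank ℝ W = p)
    (α : V →ₗ[ℝ] V →ₗ[ℝ] W) (hsymm : ∀ X Y : V, α X Y = α Y X)
    (hK : ∀ X Y : V, LinearIndependent ℝ ![X, Y] →
      ⟪α X X, α Y Y⟫ - ‖α X Y‖ ^ 2 < 0) :
    n - 1 ≤ p := by
  rcases Nat.eq_zero_or_pos n with hn0 | hnpos
  · omega
  -- V is nontrivial
  have hV : Nontrivial V := Module.nontrivial_of_finrank_pos (by omega : 0 < Module.finrank ℝ V)
  -- the function X ↦ ‖α X X‖² is continuous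
  set g : V → ℝ := fun X => ‖α X X‖ ^ 2 with hg
  have hcont : Continuous g := by
    let A : V →ₗ[ℝ] (V →L[ℝ] W) :=
      { toFun := fun X => LinearMap.toContinuousLinearMap (α X)
        map_add' := fun x y => by
          ext z; simp [LinearMap.coe_toContinuousLinearMap']
        map_smul' := fun c x => by
          ext z; simp [LinearMap.coe_toContinuousLinearMap'] }
    have hA : Continuous fun X : V => LinearMap.toContinuousLinearMap (α X) :=
      A.continuous_of_finiteDimensional
    have h2 : Continuous fun X : V => α X X := by
      have := (isBoundedBilinearMap_apply (𝕜 := ℝ) (E := V) (F := W)).continuous.comp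
        (hA.prodMk continuous_id)
      exact this
    exact (h2.norm).pow 2
  -- take a minimizer X₁ of g on the unit sphere
  obtain ⟨X₁, hX₁s, hX₁min⟩ := (isCompact_sphere (0 : V) 1).exists_isMinOn
    (NormedSpace.sphere_nonempty.mpr zero_le_one) hcont.continuousOn
  have hX₁ : ‖X₁‖ = 1 := mem_sphere_zero_iff_norm.mp hX₁s
  -- the map Y ↦ (α X₁ Y, ⟪X₁, Y⟫) is injective
  set L : V →ₗ[ℝ] W × ℝ := (α X₁).prod ((innerSL ℝ X₁ : V →L[ℝ] ℝ) : V →ₗ[ℝ] ℝ) with hL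
  have hinj : Function.Injective L := by
    rw [← LinearMap.ker_eq_bot]
    rw [LinearMap.ker_eq_bot']
    intro Y hY0
    by_contra hYne
    have hαY : α X₁ Y = 0 := congrArg Prod.fst hY0
    have hiY : ⟪X₁, Y⟫ = 0 := congrArg Prod.snd hY0
    -- linear independence of X₁, Y
    have hindep : LinearIndependent ℝ ![X₁, Y] := by
      rw [LinearIndependent.pair_iff]
      intro s t hst
      have h1 : ⟪X₁, s • X₁ + t • Y⟫ = 0 := by rw [hst]; simp
      rw [inner_add_right, real_inner_smul_right, real_inner_smul_right, hiY,
        real_inner_self_eq_norm_sq, hX₁] at h1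
      have hs : s = 0 := by nlinarith
      have ht : t = 0 := by
        subst hs
        simp only [zero_smul, zero_add] at hst
        rcases smul_eq_zero.mp hst with h | h
        · exact h
        · exact absurd h hYne
      exact ⟨hs, ht⟩
    -- key consequence of negative curvature
    have hKey := hK X₁ Y hindep
    rw [hαY] at hKey
    simp only [norm_zero] at hKey
    have huw : ⟪α X₁ X₁, α Y Y⟫ < 0 := by nlinarith
    -- normalize Y
    set Y' : V := ‖Y‖⁻¹ • Y with hY'
    have hYnorm : ‖Y‖ ≠ 0 := fun h => hYne (norm_eq_zero.mp h)
    have hY'norm : ‖Y'‖ = 1 := by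
      rw [hY', norm_smul, norm_inv, norm_norm, inv_mul_cancel₀ hYnorm]
    have hαY' : α X₁ Y' = 0 := by rw [hY', map_smul, hαY, smul_zero]
    have hiY' : ⟪X₁, Y'⟫ = 0 := by rw [hY', real_inner_smul_right, hiY, mul_zero]
    set u : W := α X₁ X₁ with hu
    set w : W := α Y' Y' with hw
    have huw' : ⟪u, w⟫ < 0 := by
      have : w = (‖Y‖⁻¹ * ‖Y‖⁻¹) • α Y Y := by
        rw [hw, hY', map_smul, map_smul, LinearMap.smul_apply, smul_smul]
      rw [this, real_inner_smul_right]
      have hpos : 0 < ‖Y‖⁻¹ * ‖Y‖⁻¹ := by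
        have : 0 < ‖Y‖ := lt_of_le_of_ne (norm_nonneg Y) (Ne.symm hYnorm)
        positivity
      exact mul_neg_of_pos_of_neg hpos huw
    have hune : u ≠ 0 := by
      intro h; rw [h] at huw'; simp at huw'
    set m : ℝ := ‖u‖ ^ 2 with hm
    have hmpos : 0 < m := by rw [hm]; exact pow_pos (norm_pos_iff.mpr hune) 2
    have hwune : w - u ≠ 0 := by
      intro h
      have : w = u := by rwa [sub_eq_zero] at h
      rw [this, real_inner_self_eq_norm_sq] at huw'
      nlinarith
    set d : ℝ := ‖w - u‖ ^ 2 with hd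
    have hdpos : 0 < d := by
      rw [hd]; exact pow_pos (norm_pos_iff.mpr hwune) 2
    set t : ℝ := min 1 (2 * m / d) with ht
    have htpos : 0 < t := lt_min one_pos (div_pos (by linarith) hdpos)
    have htle1 : t ≤ 1 := min_le_left _ _
    have htd : t * d ≤ 2 * m := by
      have h1 : t ≤ 2 * m / d := min_le_right _ _
      calc t * d ≤ (2 * m / d) * d := by nlinarith
        _ = 2 * m := by field_simp
    -- form the competitor Z
    set s : ℝ := Real.sqrt t with hs
    set c : ℝ := Real.sqrt (1 - t) with hc
    have hs2 : s ^ 2 = t := Real.sq_sqrt htpos.le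
    have hc2 : c ^ 2 = 1 - t := Real.sq_sqrt (by linarith)
    set Z : V := c • X₁ + s • Y' with hZ
    have hZnorm : ‖Z‖ = 1 := by
      have h1 : ‖Z‖ ^ 2 = 1 := by
        rw [hZ, norm_add_sq_real, norm_smul, norm_smul, real_inner_smul_left,
          real_inner_smul_right, hiY', mul_zero, mul_zero, mul_zero]
        rw [mul_pow, mul_pow, hX₁, hY'norm, Real.norm_eq_abs, Real.norm_eq_abs,
          sq_abs, sq_abs, hs2, hc2]
        ring
      calc ‖Z‖ = Real.sqrt (‖Z‖ ^ 2) := (Real.sqrt_sq (norm_nonneg Z)).symm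
        _ = 1 := by rw [h1, Real.sqrt_one]
    have hcc : c * c = 1 - t := by rw [← hc2]; ring
    have hss : s * s = t := by rw [← hs2]; ring
    have hαZ : α Z Z = (1 - t) • u + t • w := by
      rw [hZ]
      simp only [map_add, map_smul, LinearMap.add_apply, LinearMap.smul_apply,
        hsymm Y' X₁, hαY', smul_zero, add_zero, zero_add, smul_smul]
      rw [hcc, hss, ← hu, ← hw]
    -- minimality at X₁ gives a contradiction
    have hmin2 : ‖α X₁ X₁‖ ^ 2 ≤ ‖α Z Z‖ ^ 2 := hX₁min (mem_sphere_zero_iff_norm.mpr hZnorm)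
    rw [hαZ, ← hu, ← hm] at hmin2
    have hexp : ‖(1 - t) • u + t • w‖ ^ 2
        = (1 - t) ^ 2 * m + 2 * ((1 - t) * t * ⟪u, w⟫) + t ^ 2 * ‖w‖ ^ 2 := by
      rw [norm_add_sq_real, norm_smul, norm_smul, real_inner_smul_left, real_inner_smul_right,
        mul_pow, mul_pow, Real.norm_eq_abs, Real.norm_eq_abs, sq_abs, sq_abs, hm]
      ring
    rw [hexp] at hmin2
    have hdval : d = ‖w‖ ^ 2 - 2 * ⟪u, w⟫ + m := by
      rw [hd, hm, @norm_sub_sq_real, real_inner_comm]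
    -- hmin : m ≤ (1-t)²m + 2(1-t)t⟪u,w⟫ + t²‖w‖², contradiction
    nlinarith [hmin2, htd, huw', htpos, hdval, mul_pos htpos htpos]
  -- conclude via rank comparison
  have hle : Module.finrank ℝ V ≤ Module.finrank ℝ (W × ℝ) :=
    LinearMap.finrank_le_finrank_of_injective hinj
  rw [Module.finrank_prod, Module.finrank_self, hn, hp] at hle
  omega
end

section
/- Let V be an n-dimensional real inner product space, W a p-dimensional real inner product space with p < n − 1, and α : V × V → W a symmetric bilinear form. Suppose there exists a nonzero vector X₀ ∈ V with α(X₀, X₀) = 0. Then there exist linearly independent vectors X, Y ∈ V with α(X,X) = α(X,Y) = 0; in particular K_α(X,Y) = ⟨α(X,X),α(Y,Y)⟩ − ‖α(X,Y)‖² = 0, so K_α is not everywhere negative. -/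
open scoped RealInnerProductSpace

/-- If `p < n − 1` and the symmetric bilinear form `α : V × V → W` has a nonzero
asymptotic vector `X₀` (i.e. `α(X₀,X₀) = 0`), then there are linearly independent
`X, Y` with `α(X,X) = α(X,Y) = 0`; in particular
`K_α(X,Y) = ⟪α(X,X), α(Y,Y)⟫ − ‖α(X,Y)‖² = 0`, so `K_α` is not everywhere negative. -/
theorem asymptotic_vector_flat_plane
    {V W : Type*} [NormedAddCommGroup V] [InnerProductSpace ℝ V]
    [NormedAddCommGroup W] [InnerProductSpace ℝ W]
    [FiniteDimensional ℝ V] [FiniteDimensional ℝ W]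
    (n p : ℕ) (hn : Module.finrank ℝ V = n) (hp : Module.finrank ℝ W = p)
    (hpn : p < n - 1)
    (α : V →ₗ[ℝ] V →ₗ[ℝ] W) (hsymm : ∀ X Y : V, α X Y = α Y X)
    (X₀ : V) (hX₀ : X₀ ≠ 0) (hasymp : α X₀ X₀ = 0) :
    ∃ X Y : V, LinearIndependent ℝ ![X, Y] ∧ α X X = 0 ∧ α X Y = 0 ∧
      ⟪α X X, α Y Y⟫ - ‖α X Y‖ ^ 2 = 0 := by
  -- restrict Y ↦ α X₀ Y to the orthogonal complement of X₀
  set K : Submodule ℝ V := (ℝ ∙ X₀)ᗮ with hK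
  have hdimK : Module.finrank ℝ K = n - 1 := by
    have := Submodule.finrank_add_finrank_orthogonal (K := (ℝ ∙ X₀ : Submodule ℝ V))
    rw [finrank_span_singleton hX₀, hn, ← hK] at this
    omega
  have hlt : Module.finrank ℝ W < Module.finrank ℝ K := by
    rw [hdimK, hp]; exact hpn
  let f : K →ₗ[ℝ] W := (α X₀).comp K.subtype
  obtain ⟨Y, hYker, hY0⟩ : ∃ y : K, y ∈ LinearMap.ker f ∧ y ≠ 0 := by
    by_contra h
    push_neg at h
    have hker : LinearMap.ker f = ⊥ := by
      ext y; simp only [Submodule.mem_bot]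
      exact ⟨h y, fun hy => hy ▸ (LinearMap.ker f).zero_mem⟩
    have hinj : Function.Injective f := LinearMap.ker_eq_bot.mp hker
    have := LinearMap.finrank_le_finrank_of_injective hinj
    omega
  have hYV : (Y : V) ≠ 0 := fun h => hY0 (Subtype.ext h)
  have hαY : α X₀ (Y : V) = 0 := hYker
  have horth : ⟪X₀, (Y : V)⟫ = 0 := by
    have := Y.2
    exact (Submodule.mem_orthogonal _ _).mp this X₀ (Submodule.mem_span_singleton_self X₀)
  refine ⟨X₀, (Y : V), ?_, hasymp, hαY, by simp [hasymp, hαY]⟩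
  rw [LinearIndependent.pair_iff]
  intro a b hab
  have h1 : ⟪X₀, a • X₀ + b • (Y : V)⟫ = 0 := by rw [hab]; simp
  have h2 : ⟪(Y : V), a • X₀ + b • (Y : V)⟫ = 0 := by rw [hab]; simp
  rw [inner_add_right, inner_smul_right, inner_smul_right, horth] at h1
  have hYX : ⟪(Y : V), X₀⟫ = 0 := by rw [real_inner_comm]; exact horth
  rw [inner_add_right, inner_smul_right, inner_smul_right, hYX] at h2
  have hX2 : ⟪X₀, X₀⟫ ≠ 0 := fun h => hX₀ (inner_self_eq_zero.mp h)
  have hY2 : ⟪(Y : V), (Y : V)⟫ ≠ 0 := fun h => hYV (inner_self_eq_zero.mp h)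
  constructor
  · have : a * ⟪X₀, X₀⟫ = 0 := by linarith
    exact (mul_eq_zero.mp this).resolve_right hX2
  · have : b * ⟪(Y : V), (Y : V)⟫ = 0 := by linarith
    exact (mul_eq_zero.mp this).resolve_right hY2
end

section
/- Let V be an n-dimensional real inner product space, W a p-dimensional real inner product space, λ ≥ 0, and α : V × V → W a symmetric bilinear form satisfying K_α(σ) ≤ λ for every plane σ ⊂ V. If S ⊆ V is a subspace with dim S > p, then there exists a unit vector X ∈ S with ‖α(X,X)‖ ≤ √λ. -/
open scoped RealInnerProductSpace
open Filter Topology Module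


private lemma limit_nonneg_pos {f : ℝ → ℝ} (hf : Continuous f)
    (h : ∀ t : ℝ, 0 < t → 0 ≤ f t) : 0 ≤ f 0 :=
  ge_of_tendsto ((hf.tendsto 0).mono_left nhdsWithin_le_nhds :
      Tendsto f (𝓝[>] (0:ℝ)) (𝓝 (f 0)))
    (eventually_nhdsWithin_of_forall fun t ht => h t ht)

private lemma limit_nonneg_neg {f : ℝ → ℝ} (hf : Continuous f)
    (h : ∀ t : ℝ, t < 0 → 0 ≤ f t) : 0 ≤ f 0 :=
  ge_of_tendsto ((hf.tendsto 0).mono_left nhdsWithin_le_nhds :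
      Tendsto f (𝓝[<] (0:ℝ)) (𝓝 (f 0)))
    (eventually_nhdsWithin_of_forall fun t ht => h t ht)

private lemma limit_nonneg_ne {f : ℝ → ℝ} (hf : Continuous f)
    (h : ∀ t : ℝ, t ≠ 0 → 0 ≤ f t) : 0 ≤ f 0 :=
  ge_of_tendsto ((hf.tendsto 0).mono_left nhdsWithin_le_nhds :
      Tendsto f (𝓝[≠] (0:ℝ)) (𝓝 (f 0)))
    (eventually_nhdsWithin_of_forall fun t ht => h t ht)

private lemma poly_min (c₁ c₂ c₃ c₄ : ℝ)
    (h : ∀ t : ℝ, 0 ≤ c₁ * t + c₂ * t ^ 2 + c₃ * t ^ 3 + c₄ * t ^ 4) :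
    c₁ = 0 ∧ 0 ≤ c₂ := by
  have hcont : Continuous fun t : ℝ => c₁ + c₂ * t + c₃ * t ^ 2 + c₄ * t ^ 3 := by fun_prop
  have h1 : 0 ≤ c₁ := by
    have := limit_nonneg_pos hcont (fun t ht => by nlinarith [h t])
    simpa using this
  have h2 : c₁ ≤ 0 := by
    have hcont' : Continuous fun t : ℝ => -(c₁ + c₂ * t + c₃ * t ^ 2 + c₄ * t ^ 3) := by fun_prop
    have := limit_nonneg_neg hcont' (fun t ht => by nlinarith [h t])
    simp at this
    linarith
  have hc1 : c₁ = 0 := le_antisymm h2 h1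
  refine ⟨hc1, ?_⟩
  have hcont2 : Continuous fun t : ℝ => c₂ + c₃ * t + c₄ * t ^ 2 := by fun_prop
  have := limit_nonneg_ne hcont2 (fun t ht => by
    have h2 := h t
    rw [hc1] at h2
    have ht2 : 0 < t ^ 2 := by positivity
    nlinarith)
  simpa using this

private lemma otsuki_key {W : Type*} [NormedAddCommGroup W] [InnerProductSpace ℝ W]
    (lam m : ℝ) (a b c : W) (hm : m = ‖a‖ ^ 2) (hmlt : lam < m)
    (hineq : ∀ t : ℝ, m * (1 + t ^ 2) ^ 2 ≤ ‖a + (2 * t) • b + (t ^ 2) • c‖ ^ 2)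
    (hcurv : ⟪a, c⟫ - ‖b‖ ^ 2 ≤ lam) :
    ⟪a, b⟫ = 0 ∧ b ≠ 0 := by
  have hexp2 : ∀ t : ℝ, ‖a + (2 * t) • b + (t ^ 2) • c‖ ^ 2 =
      ‖a‖ ^ 2 + (4 * ⟪a, b⟫) * t + (4 * ‖b‖ ^ 2 + 2 * ⟪a, c⟫) * t ^ 2
        + (4 * ⟪b, c⟫) * t ^ 3 + ‖c‖ ^ 2 * t ^ 4 := by
    intro t
    have hba : ⟪b, a⟫ = ⟪a, b⟫ := real_inner_comm a b
    have hca : ⟪c, a⟫ = ⟪a, c⟫ := real_inner_comm a c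
    have hcb : ⟪c, b⟫ = ⟪b, c⟫ := real_inner_comm b c
    rw [← real_inner_self_eq_norm_sq]
    simp only [inner_add_left, inner_add_right, real_inner_smul_left, real_inner_smul_right,
      hba, hca, hcb]
    rw [real_inner_self_eq_norm_sq a, real_inner_self_eq_norm_sq b, real_inner_self_eq_norm_sq c]
    ring
  have hpoly : ∀ t : ℝ, 0 ≤ (4 * ⟪a, b⟫) * t + (4 * ‖b‖ ^ 2 + 2 * ⟪a, c⟫ - 2 * m) * t ^ 2
      + (4 * ⟪b, c⟫) * t ^ 3 + (‖c‖ ^ 2 - m) * t ^ 4 := by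
    intro t
    have h1 := hineq t
    rw [hexp2 t, ← hm] at h1
    nlinarith [h1]
  obtain ⟨hab, hc2⟩ := poly_min _ _ _ _ hpoly
  have hab' : ⟪a, b⟫ = 0 := by linarith
  refine ⟨hab', ?_⟩
  intro hb0
  rw [hb0] at hc2 hcurv
  simp at hc2 hcurv
  nlinarith

/-- Contrapositive form of Otsuki's Lemma: if `α : V × V → W` is a symmetric
bilinear form with `K_α(σ) ≤ λ` for every plane `σ ⊂ V` (where `λ ≥ 0`), then any
subspace `S ⊆ V` with `dim S > p = dim W` contains a unit vector `X` with
`‖α(X,X)‖ ≤ √λ`. -/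
theorem otsuki_contrapositive
    {V W : Type*} [NormedAddCommGroup V] [InnerProductSpace ℝ V]
    [NormedAddCommGroup W] [InnerProductSpace ℝ W]
    [FiniteDimensional ℝ V] [FiniteDimensional ℝ W]
    (n p : ℕ) (hn : Module.finrank ℝ V = n) (hp : Module.finrank ℝ W = p)
    (lam : ℝ) (hlam : 0 ≤ lam)
    (α : V →ₗ[ℝ] V →ₗ[ℝ] W) (hsymm : ∀ X Y : V, α X Y = α Y X)
    (hK : ∀ X Y : V, ⟪α X X, α Y Y⟫ - ‖α X Y‖ ^ 2 ≤
      lam * (‖X‖ ^ 2 * ‖Y‖ ^ 2 - ⟪X, Y⟫ ^ 2))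
    (S : Submodule ℝ V) (hS : p < Module.finrank ℝ S) :
    ∃ X ∈ S, ‖X‖ = 1 ∧ ‖α X X‖ ≤ Real.sqrt lam := by
  by_contra hcon
  push_neg at hcon
  have hbig : ∀ X : V, X ∈ S → ‖X‖ = 1 → lam < ‖α X X‖ ^ 2 := by
    intro X hX h1
    have := hcon X hX h1
    nlinarith [Real.sq_sqrt hlam, Real.sqrt_nonneg lam]
  have hcont : Continuous fun v : V => α v v := by
    have hA : Continuous fun v : V => LinearMap.toContinuousLinearMap (α v) :=
      ((LinearMap.toContinuousLinearMap :
        (V →ₗ[ℝ] W) ≃ₗ[ℝ] (V →L[ℝ] W)).toLinearMap.comp α).continuous_of_finiteDimensional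
    exact hA.clm_apply continuous_id
  haveI : Nontrivial S :=
    Module.nontrivial_of_finrank_pos (R := ℝ) (Nat.lt_of_le_of_lt (Nat.zero_le p) hS)
  obtain ⟨X₀s, hX₀sph, hmin⟩ := (isCompact_sphere (0 : S) 1).exists_isMinOn
    (NormedSpace.sphere_nonempty.mpr zero_le_one)
    (((hcont.comp continuous_subtype_val).norm.pow 2).continuousOn :
      ContinuousOn (fun x : S => ‖α (x : V) (x : V)‖ ^ 2) _)
  obtain ⟨X₀, hX₀S⟩ := X₀s
  have hX₀1 : ‖X₀‖ = 1 := by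
    have := mem_sphere_zero_iff_norm.mp hX₀sph
    simpa using this
  have hmin' : ∀ v : V, v ∈ S → ‖v‖ = 1 → ‖α X₀ X₀‖ ^ 2 ≤ ‖α v v‖ ^ 2 := by
    intro v hv h1
    have hmem : (⟨v, hv⟩ : S) ∈ Metric.sphere (0 : S) 1 := by
      rw [mem_sphere_zero_iff_norm]
      simpa using h1
    exact hmin hmem
  have hm : lam < ‖α X₀ X₀‖ ^ 2 := hbig X₀ hX₀S hX₀1
  have ha0 : α X₀ X₀ ≠ 0 := by
    intro h
    rw [h] at hm
    simp at hm
    linarith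
  -- key lemma for unit Y orthogonal to X₀
  have key : ∀ Y : V, Y ∈ S → ⟪X₀, Y⟫ = 0 → ‖Y‖ = 1 →
      ⟪α X₀ X₀, α X₀ Y⟫ = 0 ∧ α X₀ Y ≠ 0 := by
    intro Y hYS hYorth hY1
    have hexp : ∀ t : ℝ, α (X₀ + t • Y) (X₀ + t • Y) =
        α X₀ X₀ + (2 * t) • α X₀ Y + (t ^ 2) • α Y Y := by
      intro t
      simp only [map_add, map_smul, LinearMap.add_apply, LinearMap.smul_apply, hsymm Y X₀]
      module
    have hnorm : ∀ t : ℝ, ‖X₀ + t • Y‖ ^ 2 = 1 + t ^ 2 := by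
      intro t
      have h2 : ⟪Y, X₀⟫ = 0 := by rw [real_inner_comm]; exact hYorth
      rw [← real_inner_self_eq_norm_sq]
      simp only [inner_add_left, inner_add_right, real_inner_smul_left, real_inner_smul_right,
        hYorth, h2]
      rw [real_inner_self_eq_norm_sq X₀, real_inner_self_eq_norm_sq Y, hX₀1, hY1]
      ring
    have hineq : ∀ t : ℝ, ‖α X₀ X₀‖ ^ 2 * (1 + t ^ 2) ^ 2 ≤
        ‖α X₀ X₀ + (2 * t) • α X₀ Y + (t ^ 2) • α Y Y‖ ^ 2 := by
      intro t
      have hu2 : ‖X₀ + t • Y‖ ^ 2 = 1 + t ^ 2 := hnorm t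
      set u : V := X₀ + t • Y with hu_def
      have hupos : 0 < ‖u‖ := by nlinarith [norm_nonneg u]
      have huS : u ∈ S := S.add_mem hX₀S (S.smul_mem t hYS)
      have hwS : (‖u‖⁻¹ • u) ∈ S := S.smul_mem _ huS
      have hw1 : ‖(‖u‖⁻¹ • u)‖ = 1 := by
        rw [norm_smul, norm_inv, norm_norm]
        field_simp
      have h1 := hmin' _ hwS hw1
      have hαw : α (‖u‖⁻¹ • u) (‖u‖⁻¹ • u) = (‖u‖⁻¹ ^ 2) • α u u := by
        simp only [map_smul, LinearMap.smul_apply]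
        module
      rw [hαw, norm_smul, Real.norm_eq_abs, abs_of_nonneg (by positivity : (0:ℝ) ≤ ‖u‖⁻¹ ^ 2),
        mul_pow] at h1
      have h3 : (‖u‖⁻¹ ^ 2) ^ 2 * ‖u‖ ^ 4 = 1 := by
        field_simp
      have h4 : ‖α X₀ X₀‖ ^ 2 * ‖u‖ ^ 4 ≤ ‖α u u‖ ^ 2 := by
        have h5 := mul_le_mul_of_nonneg_right h1 (by positivity : (0:ℝ) ≤ ‖u‖ ^ 4)
        calc ‖α X₀ X₀‖ ^ 2 * ‖u‖ ^ 4 ≤ (‖u‖⁻¹ ^ 2) ^ 2 * ‖α u u‖ ^ 2 * ‖u‖ ^ 4 := h5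
          _ = ‖α u u‖ ^ 2 := by
              rw [mul_comm ((‖u‖⁻¹ ^ 2) ^ 2) (‖α u u‖ ^ 2), mul_assoc, h3, mul_one]
      have h6 : ‖u‖ ^ 4 = (1 + t ^ 2) ^ 2 := by nlinarith [hu2]
      rw [h6] at h4
      rw [← hexp t]
      exact h4
    have hcurv : ⟪α X₀ X₀, α Y Y⟫ - ‖α X₀ Y‖ ^ 2 ≤ lam := by
      have := hK X₀ Y
      rw [hX₀1, hY1, hYorth] at this
      simpa using this
    exact otsuki_key lam _ _ _ _ rfl hm hineq hcurv
  -- general (non-unit) versions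
  have claimA : ∀ Y : V, Y ∈ S → ⟪X₀, Y⟫ = 0 → ⟪α X₀ X₀, α X₀ Y⟫ = 0 := by
    intro Y hYS hYorth
    by_cases hY0 : Y = 0
    · simp [hY0]
    · have hYn : ‖Y‖ ≠ 0 := norm_ne_zero_iff.mpr hY0
      have h1 := (key (‖Y‖⁻¹ • Y) (S.smul_mem _ hYS)
        (by rw [real_inner_smul_right, hYorth]; ring)
        (by rw [norm_smul, norm_inv, norm_norm]; field_simp)).1
      rw [map_smul, real_inner_smul_right] at h1
      rcases mul_eq_zero.mp h1 with h | h
      · exact absurd (inv_eq_zero.mp h) hYn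
      · exact h
  have claimB : ∀ Y : V, Y ∈ S → ⟪X₀, Y⟫ = 0 → Y ≠ 0 → α X₀ Y ≠ 0 := by
    intro Y hYS hYorth hY0 hzero
    have hYn : ‖Y‖ ≠ 0 := norm_ne_zero_iff.mpr hY0
    have h1 := (key (‖Y‖⁻¹ • Y) (S.smul_mem _ hYS)
      (by rw [real_inner_smul_right, hYorth]; ring)
      (by rw [norm_smul, norm_inv, norm_norm]; field_simp)).2
    apply h1
    rw [map_smul, hzero, smul_zero]
  -- dimension argument
  have hX₀ne : X₀ ≠ 0 := by
    intro h; rw [h] at hX₀1; simp at hX₀1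
  have hmemT : ∀ y : V, y ∈ S ⊓ (ℝ ∙ X₀)ᗮ → y ∈ S ∧ ⟪X₀, y⟫ = 0 := by
    intro y hy
    rw [Submodule.mem_inf] at hy
    exact ⟨hy.1, Submodule.mem_orthogonal_singleton_iff_inner_right.mp hy.2⟩
  let L : (S ⊓ (ℝ ∙ X₀)ᗮ : Submodule ℝ V) →ₗ[ℝ] ((ℝ ∙ (α X₀ X₀))ᗮ : Submodule ℝ W) :=
    LinearMap.codRestrict _ ((α X₀).domRestrict _) (by
      intro y
      rw [Submodule.mem_orthogonal_singleton_iff_inner_right]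
      exact claimA y (hmemT y y.2).1 (hmemT y y.2).2)
  have hinj : Function.Injective L := by
    rw [← LinearMap.ker_eq_bot, LinearMap.ker_eq_bot']
    intro y hy
    by_contra hne
    apply claimB y (hmemT y y.2).1 (hmemT y y.2).2
      (fun h => hne (Subtype.ext h))
    have := congrArg (Subtype.val) hy
    simpa [L] using this
  have hle : finrank ℝ (S ⊓ (ℝ ∙ X₀)ᗮ : Submodule ℝ V) ≤
      finrank ℝ ((ℝ ∙ (α X₀ X₀))ᗮ : Submodule ℝ W) :=
    LinearMap.finrank_le_finrank_of_injective hinj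
  have h1 : finrank ℝ (ℝ ∙ X₀) = 1 := finrank_span_singleton hX₀ne
  have h2 : finrank ℝ (ℝ ∙ X₀) + finrank ℝ ((ℝ ∙ X₀)ᗮ : Submodule ℝ V) = n := by
    rw [Submodule.finrank_add_finrank_orthogonal, hn]
  have h3 : finrank ℝ (S ⊔ (ℝ ∙ X₀)ᗮ : Submodule ℝ V) +
      finrank ℝ (S ⊓ (ℝ ∙ X₀)ᗮ : Submodule ℝ V) =
      finrank ℝ S + finrank ℝ ((ℝ ∙ X₀)ᗮ : Submodule ℝ V) :=
    Submodule.finrank_sup_add_finrank_inf_eq S _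
  have h4 : finrank ℝ (S ⊔ (ℝ ∙ X₀)ᗮ : Submodule ℝ V) ≤ n := hn ▸ Submodule.finrank_le _
  have h5 : finrank ℝ (ℝ ∙ (α X₀ X₀)) = 1 := finrank_span_singleton ha0
  have h6 : finrank ℝ (ℝ ∙ (α X₀ X₀)) + finrank ℝ ((ℝ ∙ (α X₀ X₀))ᗮ : Submodule ℝ W) = p := by
    rw [Submodule.finrank_add_finrank_orthogonal, hp]
  omega
end

section
/- Let M be an n-dimensional compact Riemannian manifold isometrically immersed in ℝ^{n+p} via f. Suppose at every point x ∈ M there exists a d-dimensional subspace V_x ⊆ T_xM such that the sectional curvature K_M(σ) ≤ 0 for every plane σ ⊆ V_x. Then p ≥ d. -/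
open scoped RealInnerProductSpace

open Filter Set

private lemma deriv2_nonpos_of_max {g g' : ℝ → ℝ} {a : ℝ}
    (hg : ∀ t, HasDerivAt g (g' t) t) (hg' : HasDerivAt g' a 0)
    (hmax : ∀ t, g t ≤ g 0) : g' 0 = 0 ∧ a ≤ 0 := by
  have h0 : g' 0 = 0 := by
    have hloc : IsLocalMax g 0 := Filter.Eventually.of_forall hmax
    have := hloc.deriv_eq_zero
    rwa [(hg 0).deriv] at this
  refine ⟨h0, ?_⟩
  by_contra hpos
  push_neg at hpos
  have hs : Tendsto (slope g' 0) (nhdsWithin 0 {(0:ℝ)}ᶜ) (nhds a) :=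
    hasDerivAt_iff_tendsto_slope.mp hg'
  have hs' : Tendsto (slope g' 0) (nhdsWithin 0 (Set.Ioi 0)) (nhds a) :=
    hs.mono_left (nhdsWithin_mono 0 (fun t ht => ne_of_gt ht))
  have hev : ∀ᶠ t in nhdsWithin 0 (Set.Ioi 0), 0 < slope g' 0 t :=
    hs'.eventually (eventually_gt_nhds hpos)
  have hev' : ∀ᶠ t in nhdsWithin 0 (Set.Ioi 0), 0 < g' t := by
    filter_upwards [hev, self_mem_nhdsWithin] with t ht ht'
    have heq : slope g' 0 t = g' t / t := by
      simp [slope, h0, div_eq_inv_mul]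
    rw [heq] at ht
    have htpos : (0:ℝ) < t := ht'
    have := (div_pos_iff.mp ht)
    rcases this with ⟨h1,_⟩|⟨_,h2⟩
    · exact h1
    · linarith
  obtain ⟨ε, hε, hIoo⟩ := mem_nhdsGT_iff_exists_Ioo_subset.mp hev'
  have hεpos : (0:ℝ) < ε := hε
  have hmono : StrictMonoOn g (Set.Icc 0 ε) := by
    apply strictMonoOn_of_deriv_pos (convex_Icc 0 ε)
    · exact fun t _ => (hg t).continuousAt.continuousWithinAt
    · intro t ht
      rw [interior_Icc] at ht
      rw [(hg t).deriv]
      exact hIoo ht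
  have : g 0 < g ε := hmono (by constructor <;> simp [le_of_lt hεpos]) (by constructor <;> simp [le_of_lt hεpos, le_refl]) hεpos
  exact absurd (hmax ε) (not_le.mpr this)

private lemma deriv2_nonneg_of_min {g g' : ℝ → ℝ} {a : ℝ}
    (hg : ∀ t, HasDerivAt g (g' t) t) (hg' : HasDerivAt g' a 0)
    (hmin : ∀ t, g 0 ≤ g t) : g' 0 = 0 ∧ 0 ≤ a := by
  have h := deriv2_nonpos_of_max (g := fun t => -g t) (g' := fun t => -g' t) (a := -a)
    (fun t => (hg t).neg) hg'.neg (fun t => neg_le_neg (hmin t))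
  constructor
  · have := h.1; simpa using this
  · linarith [h.2]
open scoped RealInnerProductSpace

-- curve analysis at a norm-maximizing point
private lemma curve_max_ineq {E : Type*} [NormedAddCommGroup E] [InnerProductSpace ℝ E]
    {u : ℝ → E} (hu : ContDiff ℝ 2 u) (hmax : ∀ t, ‖u t‖ ≤ ‖u 0‖) :
    ⟪u 0, deriv u 0⟫ = 0 ∧ ‖deriv u 0‖^2 + ⟪u 0, deriv (deriv u) 0⟫ ≤ 0 := by
  have hud : Differentiable ℝ u := hu.differentiable (by norm_num)
  have hu1 : ∀ t, HasDerivAt u (deriv u t) t := fun t => (hud t).hasDerivAt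
  have hdu : ContDiff ℝ 1 (deriv u) := by
    have h2 : ContDiff ℝ (1+1) u := by norm_num at hu ⊢; exact hu
    exact (contDiff_succ_iff_deriv.mp h2).2.2
  have hu2 : HasDerivAt (deriv u) (deriv (deriv u) 0) 0 :=
    ((hdu.differentiable one_ne_zero) 0).hasDerivAt
  set g : ℝ → ℝ := fun t => ⟪u t, u t⟫ with hgdef
  set g' : ℝ → ℝ := fun t => ⟪u t, deriv u t⟫ + ⟪deriv u t, u t⟫ with hg'def
  have hg : ∀ t, HasDerivAt g (g' t) t := fun t => (hu1 t).inner ℝ (hu1 t)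
  have hg' : HasDerivAt g'
      ((⟪u 0, deriv (deriv u) 0⟫ + ⟪deriv u 0, deriv u 0⟫) +
       (⟪deriv u 0, deriv u 0⟫ + ⟪deriv (deriv u) 0, u 0⟫)) 0 :=
    ((hu1 0).inner ℝ hu2).add (hu2.inner ℝ (hu1 0))
  have hmax' : ∀ t, g t ≤ g 0 := by
    intro t
    simp only [hgdef, real_inner_self_eq_norm_sq]
    exact pow_le_pow_left₀ (norm_nonneg _) (hmax t) 2
  obtain ⟨h1, h2⟩ := deriv2_nonpos_of_max hg hg' hmax'
  have hc : ⟪deriv u 0, u 0⟫ = ⟪u 0, deriv u 0⟫ := real_inner_comm _ _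
  have hc2 : ⟪deriv (deriv u) 0, u 0⟫ = ⟪u 0, deriv (deriv u) 0⟫ := real_inner_comm _ _
  constructor
  · simp only [hg'def, hc] at h1; linarith
  · rw [hc2] at h2
    have : ⟪deriv u 0, deriv u 0⟫ = ‖deriv u 0‖^2 := real_inner_self_eq_norm_sq _
    linarith


private lemma otsuki {E : Type*} [NormedAddCommGroup E] [InnerProductSpace ℝ E]
    [FiniteDimensional ℝ E]
    (β : E →ₗ[ℝ] E →ₗ[ℝ] E) (hs : ∀ X Y, β X Y = β Y X)
    (V : Submodule ℝ E) (W : Submodule ℝ E) (hW : ∀ X Y, β X Y ∈ W)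
    (hdef : ∀ X ∈ V, X ≠ 0 → β X X ≠ 0)
    (hgauss : ∀ X ∈ V, ∀ Y ∈ V, ⟪β X X, β Y Y⟫ ≤ ‖β X Y‖^2) :
    Module.finrank ℝ V ≤ Module.finrank ℝ W := by
  rcases Nat.eq_zero_or_pos (Module.finrank ℝ V) with h0 | hdpos
  · simp [h0]
  -- a nonzero vector of V
  have hVne : V ≠ ⊥ := by
    intro h; rw [h] at hdpos; simp at hdpos
  obtain ⟨v0, hv0V, hv0⟩ := Submodule.exists_mem_ne_zero_of_ne_bot hVne
  -- the unit sphere of V is compact and nonempty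
  set S : Set E := (V : Set E) ∩ Metric.sphere 0 1 with hSdef
  have hScpt : IsCompact S :=
    (isCompact_sphere (0:E) 1).inter_left (Submodule.closed_of_finiteDimensional V)
  have hSne : S.Nonempty := by
    refine ⟨‖v0‖⁻¹ • v0, V.smul_mem _ hv0V, ?_⟩
    have : ‖v0‖ ≠ 0 := norm_ne_zero_iff.mpr hv0
    simp [norm_smul, abs_of_nonneg (inv_nonneg.mpr (norm_nonneg v0)), inv_mul_cancel₀ this]
  -- continuity of X ↦ ‖β X X‖²
  have hβc : Continuous fun X : E => β X X := by
    set Φ : E →ₗ[ℝ] (E →L[ℝ] E) :=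
      (LinearMap.toContinuousLinearMap : (E →ₗ[ℝ] E) ≃ₗ[ℝ] (E →L[ℝ] E)).toLinearMap.comp β
      with hΦdef
    have hΦ : Continuous Φ := Φ.continuous_of_finiteDimensional
    have : Continuous fun X : E => (Φ X) X :=
      isBoundedBilinearMap_apply.continuous.comp (hΦ.prodMk continuous_id)
    simpa [hΦdef] using this
  set F : E → ℝ := fun X => ‖β X X‖^2 with hFdef
  have hFc : Continuous F := (hβc.norm).pow 2
  obtain ⟨X₀, hX₀S, hminOn⟩ := hScpt.exists_isMinOn hSne hFc.continuousOn
  obtain ⟨hX₀V, hX₀sph⟩ := hX₀S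
  have hX₀n : ‖X₀‖ = 1 := by simpa using hX₀sph
  have hmin : ∀ X ∈ S, F X₀ ≤ F X := fun X hX => hminOn hX
  set Z : E := β X₀ X₀ with hZdef
  set m : ℝ := ‖Z‖^2 with hmdef
  have hX₀ne : X₀ ≠ 0 := by
    intro h; rw [h] at hX₀n; simp at hX₀n
  have hZne : Z ≠ 0 := hdef X₀ hX₀V hX₀ne
  have hmpos : 0 < m := pow_pos (norm_pos_iff.mpr hZne) 2
  -- the minimum property scaled to all of V
  have hlower : ∀ u ∈ V, m * (‖u‖^2)^2 ≤ ‖β u u‖^2 := by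
    intro u hu
    rcases eq_or_ne u 0 with rfl | hne
    · simp
    · have hn : ‖u‖ ≠ 0 := norm_ne_zero_iff.mpr hne
      have hmem : ‖u‖⁻¹ • u ∈ S := by
        refine ⟨V.smul_mem _ hu, ?_⟩
        simp [norm_smul, abs_of_nonneg (inv_nonneg.mpr (norm_nonneg u)), inv_mul_cancel₀ hn]
      have hle := hmin _ hmem
      have hβs : β (‖u‖⁻¹ • u) (‖u‖⁻¹ • u) = (‖u‖⁻¹ * ‖u‖⁻¹) • β u u := by
        simp [map_smul, LinearMap.smul_apply, smul_smul]
      rw [hFdef] at hle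
      simp only [hβs, norm_smul, Real.norm_eq_abs, mul_pow, sq_abs] at hle
      have hn0 : 0 < ‖u‖ := lt_of_le_of_ne (norm_nonneg u) (Ne.symm hn)
      have hpow : (0:ℝ) < (‖u‖^2)^2 := by positivity
      have e : ‖u‖⁻¹^2 * ‖u‖^2 = 1 := by
        rw [← mul_pow, inv_mul_cancel₀ hn, one_pow]
      calc m * (‖u‖^2)^2 ≤ (‖u‖⁻¹^2 * ‖u‖⁻¹^2 * ‖β u u‖^2) * (‖u‖^2)^2 :=
            mul_le_mul_of_nonneg_right hle (le_of_lt hpow)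
        _ = ‖β u u‖^2 * (‖u‖⁻¹^2 * ‖u‖^2) * (‖u‖⁻¹^2 * ‖u‖^2) := by ring
        _ = ‖β u u‖^2 := by rw [e]; ring
  -- variational inequalities at the minimum
  have hvar : ∀ Y ∈ V, ⟪X₀, Y⟫ = 0 →
      ⟪Z, β X₀ Y⟫ = 0 ∧ m * ‖Y‖^2 ≤ 3 * ‖β X₀ Y‖^2 := by
    intro Y hYV hYperp
    set P : E := β X₀ Y with hPdef
    set Q : E := β Y Y with hQdef
    set c : ℝ := ‖Y‖^2 with hcdef
    set w : ℝ → E := fun t => Z + (2*t) • P + t^2 • Q with hwdef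
    set w' : ℝ → E := fun t => (2:ℝ) • P + (2*t) • Q with hw'def
    have hwd : ∀ t, HasDerivAt w (w' t) t := by
      intro t
      have h1 : HasDerivAt (fun s : ℝ => (2*s)•P) ((2:ℝ)•P) t := by
        simpa using ((hasDerivAt_id t).const_mul (2:ℝ)).smul_const P
      have h2 : HasDerivAt (fun s : ℝ => (s^2)•Q) ((2*t)•Q) t := by
        simpa using (hasDerivAt_pow 2 t).smul_const Q
      have := ((hasDerivAt_const t Z).add h1).add h2
      exact this.congr_deriv (by simp [hw'def])
    have hw'd : ∀ t, HasDerivAt w' ((2:ℝ)•Q) t := by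
      intro t
      have h2 : HasDerivAt (fun s : ℝ => (2*s)•Q) ((2:ℝ)•Q) t := by
        simpa using ((hasDerivAt_id t).const_mul (2:ℝ)).smul_const Q
      exact ((hasDerivAt_const t ((2:ℝ)•P)).add h2).congr_deriv (by simp)
    set r : ℝ → ℝ := fun t => 1 + t^2*c with hrdef
    have hrd : ∀ t, HasDerivAt r (2*t*c) t := by
      intro t
      simpa [hrdef] using (((hasDerivAt_pow 2 t).mul_const c).const_add 1)
    set q : ℝ → ℝ := fun t => ⟪w t, w t⟫ - m * (r t)^2 with hqdef
    set q' : ℝ → ℝ := fun t => (⟪w t, w' t⟫ + ⟪w' t, w t⟫) - m * (2 * r t * (2*t*c))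
      with hq'def
    have hqd : ∀ t, HasDerivAt q (q' t) t := by
      intro t
      have hinner := (hwd t).inner ℝ (hwd t)
      have hpoly : HasDerivAt (fun s => m * (r s)^2) (m * (2 * r t * (2*t*c))) t := by
        have := ((hrd t).pow 2).const_mul m
        simpa [mul_comm, mul_assoc, mul_left_comm] using this
      exact hinner.sub hpoly
    have hq'd : HasDerivAt q' (4*⟪Z,Q⟫ + 8*‖P‖^2 - 4*m*c) 0 := by
      have hinner' : HasDerivAt (fun t => ⟪w t, w' t⟫ + ⟪w' t, w t⟫)
          ((⟪w 0, (2:ℝ)•Q⟫ + ⟪w' 0, w' 0⟫) + (⟪w' 0, w' 0⟫ + ⟪(2:ℝ)•Q, w 0⟫)) 0 :=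
        ((hwd 0).inner ℝ (hw'd 0)).add ((hw'd 0).inner ℝ (hwd 0))
      have hpoly' : HasDerivAt (fun t => m * (2 * r t * (2*t*c)))
          (m * ((2*(2*0*c)) * (2*0*c) + (2 * r 0) * (2*c))) 0 := by
        have h1 : HasDerivAt (fun t : ℝ => 2 * r t) (2*(2*0*c)) 0 := (hrd 0).const_mul 2
        have h2 : HasDerivAt (fun t : ℝ => 2*t*c) (2*c) 0 := by
          simpa using ((hasDerivAt_id (0:ℝ)).const_mul 2).mul_const c
        exact (h1.mul h2).const_mul m
      have := hinner'.sub hpoly'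
      refine this.congr_deriv ?_
      simp [hwdef, hw'def, hrdef, real_inner_smul_left, real_inner_smul_right,
        real_inner_self_eq_norm_sq, real_inner_comm Q Z, norm_smul, mul_pow]
      ring
    have hq0 : q 0 = 0 := by
      simp [hqdef, hwdef, hrdef, real_inner_self_eq_norm_sq, hmdef]
    have hqmin : ∀ t, q 0 ≤ q t := by
      intro t
      rw [hq0]
      have huV : X₀ + t•Y ∈ V := V.add_mem hX₀V (V.smul_mem _ hYV)
      have hβu : β (X₀ + t•Y) (X₀ + t•Y) = w t := by
        simp only [hwdef, map_add, map_smul, LinearMap.add_apply, LinearMap.smul_apply,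
          hs Y X₀]
        module
      have hnu : ‖X₀ + t•Y‖^2 = r t := by
        rw [norm_add_sq_real, real_inner_smul_right, hYperp]
        simp [hrdef, hX₀n, norm_smul, mul_pow, hcdef, sq_abs]
      have hlow := hlower _ huV
      rw [hβu, hnu] at hlow
      have hlow2 : m * (r t)^2 ≤ ⟪w t, w t⟫ := by
        rwa [real_inner_self_eq_norm_sq]
      simp only [hqdef]
      linarith
    obtain ⟨hA1, hA2⟩ := deriv2_nonneg_of_min hqd hq'd hqmin
    have hZP : ⟪Z, P⟫ = 0 := by
      simp [hq'def, hwdef, hw'def, hrdef, real_inner_smul_left, real_inner_smul_right,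
        real_inner_comm P Z] at hA1
      linarith [real_inner_comm Z P, hA1]
    refine ⟨hZP, ?_⟩
    have hgs := hgauss X₀ hX₀V Y hYV
    linarith
  -- the injective linear map Y ↦ β X₀ Y from V into W
  let L : V →ₗ[ℝ] W := LinearMap.codRestrict W ((β X₀).domRestrict V) (fun v => hW X₀ v)
  have hLinj : Function.Injective L := by
    rw [injective_iff_map_eq_zero]
    rintro ⟨Y, hYV⟩ hLY
    have hβY : β X₀ Y = 0 := by
      have := congrArg (Subtype.val) hLY
      exact this
    set a : ℝ := ⟪X₀, Y⟫ with hadef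
    set Y' : E := Y - a • X₀ with hY'def
    have hY'V : Y' ∈ V := V.sub_mem hYV (V.smul_mem _ hX₀V)
    have hperp : ⟪X₀, Y'⟫ = 0 := by
      simp [hY'def, inner_sub_right, real_inner_smul_right,
        real_inner_self_eq_norm_sq, hX₀n, hadef]
    obtain ⟨h1, h2⟩ := hvar Y' hY'V hperp
    have hβY' : β X₀ Y' = -(a • Z) := by
      simp [hY'def, map_sub, map_smul, hβY, hZdef]
    have ha : a = 0 := by
      rw [hβY'] at h1
      simp only [inner_neg_right, real_inner_smul_right, real_inner_self_eq_norm_sq] at h1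
      have : a * ‖Z‖^2 = 0 := by linarith
      rcases mul_eq_zero.mp this with h | h
      · exact h
      · exact absurd h (by simpa [hmdef] using ne_of_gt hmpos)
    have hY'eq : Y' = Y := by simp [hY'def, ha]
    have hY0 : Y = 0 := by
      rw [hY'eq, hβY, norm_zero] at h2
      have h3 : ‖Y‖^2 = 0 := le_antisymm (by nlinarith) (by positivity)
      exact norm_eq_zero.mp ((pow_eq_zero_iff two_ne_zero).mp h3)
    exact Subtype.ext hY0
  have hfin := LinearMap.finrank_le_finrank_of_injective hLinj
  exact hfin



/-- A compact `n`-dimensional Riemannian manifold `M` isometrically immersed in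
`ℝ^{n+p}` (modelled below by a continuous map `f : M → E` into an `(n+p)`-dimensional
Euclidean space `E`, with tangent spaces `T x ⊆ E`, a normal-valued symmetric second
fundamental form `α`, second-order contact of `f` with `α` along curves, and the Gauss
equation for the sectional curvature `K`) such that at every point `x` there is a
`d`-dimensional subspace `V x ⊆ T x` on which all sectional curvatures are `≤ 0`,
must have codimension `p ≥ d`. -/
theorem compact_nonpositive_curvature_codim
    (n p d : ℕ) {M : Type*} [TopologicalSpace M] [CompactSpace M] [Nonempty M]
    {E : Type*} [NormedAddCommGroup E] [InnerProductSpace ℝ E] [FiniteDimensional ℝ E]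
    (hE : Module.finrank ℝ E = n + p)
    (f : M → E) (hf : Continuous f)
    -- tangent spaces of the immersed manifold
    (T : M → Submodule ℝ E) (hT : ∀ x, Module.finrank ℝ (T x) = n)
    -- the second fundamental form: symmetric, normal valued
    (α : M → E →ₗ[ℝ] E →ₗ[ℝ] E)
    (hsymm : ∀ x X Y, α x X Y = α x Y X)
    (hnormal : ∀ x X Y, α x X Y ∈ (T x)ᗮ)
    -- second-order contact: every tangent vector is the velocity of a smooth curve in M
    -- whose acceleration differs from α x X X by a tangent vector
    (hcurve : ∀ x : M, ∀ X ∈ T x, ∃ c : ℝ → M,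
      ContDiff ℝ 2 (f ∘ c) ∧ c 0 = x ∧ deriv (f ∘ c) 0 = X ∧
      deriv (deriv (f ∘ c)) 0 - α x X X ∈ T x)
    -- Gauss equation: (unnormalized) sectional curvature of tangent planes
    (K : M → E → E → ℝ)
    (hGauss : ∀ x, ∀ X ∈ T x, ∀ Y ∈ T x,
      K x X Y = ⟪α x X X, α x Y Y⟫ - ‖α x X Y‖ ^ 2)
    -- a d-dimensional subspace of nonpositive sectional curvature at every point
    (V : M → Submodule ℝ E)
    (hVT : ∀ x, V x ≤ T x) (hVd : ∀ x, Module.finrank ℝ (V x) = d)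
    (hneg : ∀ x, ∀ X ∈ V x, ∀ Y ∈ V x, K x X Y ≤ 0) :
    d ≤ p := by
  obtain ⟨x₀, -, hx₀⟩ := isCompact_univ.exists_isMaxOn Set.univ_nonempty hf.norm.continuousOn
  have hmax : ∀ x, ‖f x‖ ≤ ‖f x₀‖ := fun x => hx₀ (Set.mem_univ x)
  have step : ∀ X ∈ T x₀, ⟪f x₀, X⟫ = 0 ∧
      ∃ w ∈ T x₀, ‖X‖^2 + ⟪f x₀, α x₀ X X + w⟫ ≤ 0 := by
    intro X hX
    obtain ⟨c, hc2, hc0, hc1, hcT⟩ := hcurve x₀ X hX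
    have hu0 : (f ∘ c) 0 = f x₀ := by simp [hc0]
    have hm : ∀ t, ‖(f ∘ c) t‖ ≤ ‖(f ∘ c) 0‖ := by
      intro t; rw [hu0]; exact hmax _
    obtain ⟨h1, h2⟩ := curve_max_ineq hc2 hm
    rw [hu0, hc1] at h1
    rw [hu0, hc1] at h2
    refine ⟨h1, deriv (deriv (f ∘ c)) 0 - α x₀ X X, hcT, ?_⟩
    have heq : α x₀ X X + (deriv (deriv (f ∘ c)) 0 - α x₀ X X) = deriv (deriv (f ∘ c)) 0 := by
      abel
    rw [heq]
    linarith
  have horth : ∀ X ∈ T x₀, ⟪f x₀, X⟫ = 0 := fun X hX => (step X hX).1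
  have hpos : ∀ X ∈ T x₀, ‖X‖^2 ≤ ⟪-(f x₀), α x₀ X X⟫ := by
    intro X hX
    obtain ⟨-, w, hw, hineq⟩ := step X hX
    have hworth := horth w hw
    rw [inner_add_right, hworth] at hineq
    rw [inner_neg_left]
    linarith
  have hle := otsuki (α x₀) (hsymm x₀) (V x₀) ((T x₀)ᗮ) (hnormal x₀)
    (fun X hXV hXne => by
      intro h0
      have hp := hpos X (hVT x₀ hXV)
      rw [h0, inner_zero_right] at hp
      have : ‖X‖ = 0 := by nlinarith [norm_nonneg X]
      exact hXne (norm_eq_zero.mp this))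
    (fun X hXV Y hYV => by
      have hg := hGauss x₀ X (hVT x₀ hXV) Y (hVT x₀ hYV)
      have hn := hneg x₀ X hXV Y hYV
      linarith)
  rw [hVd x₀] at hle
  have hrank : Module.finrank ℝ ((T x₀)ᗮ) = p := by
    have h := Submodule.finrank_add_finrank_orthogonal (K := T x₀)
    rw [hT x₀, hE] at h
    omega
  rw [hrank] at hle
  exact hle
end

section
/- Let f : Mⁿ → M̃^{n+p} be an isometric immersion between Riemannian manifolds. Suppose there exist a point x₀ ∈ M and a d-dimensional subspace V ⊆ T_{x₀}M such that the extrinsic sectional curvature K_f(σ) = K_M(σ) − K_{M̃}(f_*σ) is strictly negative for every plane σ ⊆ V. Then p ≥ d − 1. -/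
open scoped RealInnerProductSpace

private lemma quartic_coeff_nonneg (b e : ℝ) (h : ∀ s : ℝ, 0 ≤ b * s ^ 2 + e * s ^ 4) :
    0 ≤ b := by
  by_contra hb
  push_neg at hb
  rcases le_or_gt e 0 with he | he
  · nlinarith [h 1]
  · have hu : (0:ℝ) < -b / (2 * e) := div_pos (by linarith) (by linarith)
    have hs := h (Real.sqrt (-b / (2 * e)))
    have hsq : (Real.sqrt (-b / (2 * e))) ^ 2 = -b / (2 * e) := Real.sq_sqrt hu.le
    rw [show (Real.sqrt (-b / (2 * e))) ^ 4 = ((Real.sqrt (-b / (2 * e))) ^ 2) ^ 2 by ring,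
      hsq] at hs
    have he' : e ≠ 0 := he.ne'
    have heq : b * (-b / (2 * e)) + e * (-b / (2 * e)) ^ 2 = -(b ^ 2) / (4 * e) := by
      field_simp
      ring
    rw [heq] at hs
    have hb2 : (0:ℝ) < b ^ 2 := by nlinarith [hb]
    rcases div_nonneg_iff.mp hs with ⟨h1, _⟩ | ⟨_, h2⟩
    · linarith
    · linarith

set_option maxHeartbeats 1000000

/-- Pointwise codimension restriction: let `f : Mⁿ → M̃^{n+p}` be an isometric immersion
and `x₀ ∈ M`. Model `T = T_{x₀}M` (an `n`-dimensional inner product space), the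
`p`-dimensional normal space `W = N_f M(x₀)`, the second fundamental form
`α : T × T → W`, and the sectional curvatures `KM` of `M` and `KN` of `M̃` at `x₀`
(as unnormalized curvatures of the plane spanned by two vectors), linked by
the Gauss equation.  If the extrinsic curvature `K_f = KM − KN` is negative on every
plane of a `d`-dimensional subspace `V ⊆ T`, then `p ≥ d − 1`. -/
theorem pointwise_negative_extrinsic_codim
    {T W : Type*} [NormedAddCommGroup T] [InnerProductSpace ℝ T]
    [NormedAddCommGroup W] [InnerProductSpace ℝ W]
    [FiniteDimensional ℝ T] [FiniteDimensional ℝ W]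
    (n p d : ℕ) (hT : Module.finrank ℝ T = n) (hW : Module.finrank ℝ W = p)
    (α : T →ₗ[ℝ] T →ₗ[ℝ] W) (hsymm : ∀ X Y : T, α X Y = α Y X)
    (KM KN : T → T → ℝ)
    -- Gauss equation: K_M(σ) − K_{M̃}(f_*σ) = ⟪α(X,X), α(Y,Y)⟫ − ‖α(X,Y)‖²
    (hGauss : ∀ X Y : T, KM X Y - KN X Y = ⟪α X X, α Y Y⟫ - ‖α X Y‖ ^ 2)
    (V : Submodule ℝ T) (hV : Module.finrank ℝ V = d)
    (hneg : ∀ X ∈ V, ∀ Y ∈ V, LinearIndependent ℝ ![X, Y] → KM X Y - KN X Y < 0) :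
    d - 1 ≤ p := by
  rcases Nat.eq_zero_or_pos d with hd | hd
  · simp [hd]
  haveI : Nontrivial V := Module.finrank_pos_iff.mp (by rw [hV]; exact hd)
  -- continuity of x ↦ ‖α x x‖²
  have hcont : Continuous fun x : V => ‖α (x : T) (x : T)‖ ^ 2 := by
    have h1 : Continuous fun x : T => (LinearMap.toContinuousLinearMap.toLinearMap.comp α) x :=
      (LinearMap.toContinuousLinearMap.toLinearMap.comp α).continuous_of_finiteDimensional
    have h2 : Continuous fun x : T => α x x := h1.clm_apply continuous_id
    exact ((h2.comp continuous_subtype_val).norm.pow 2)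
  obtain ⟨x₀, hx₀S, hmin⟩ := (isCompact_sphere (0 : V) 1).exists_isMinOn
    (NormedSpace.sphere_nonempty.mpr zero_le_one) hcont.continuousOn
  have hx₀1 : ‖(x₀ : T)‖ = 1 := by simpa using mem_sphere_zero_iff_norm.mp hx₀S
  have hx₀ne : x₀ ≠ 0 := by
    intro h
    rw [h] at hx₀1
    simp at hx₀1
  set A : W := α (x₀ : T) (x₀ : T) with hA
  set m : ℝ := ‖A‖ ^ 2 with hm
  have hm0 : 0 ≤ m := sq_nonneg _
  -- global minimality estimate
  have key : ∀ z : V, m * ‖(z : T)‖ ^ 4 ≤ ‖α (z : T) (z : T)‖ ^ 2 := by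
    intro z
    rcases eq_or_ne z 0 with rfl | hz
    · simp
    · have hzn : (0:ℝ) < ‖(z : T)‖ := by
        rw [norm_pos_iff]
        simpa using hz
      have hmem : (‖(z : T)‖⁻¹ • z) ∈ Metric.sphere (0 : V) 1 := by
        rw [mem_sphere_zero_iff_norm]
        have : ‖(‖(z : T)‖⁻¹ • z : V)‖ = ‖(z : T)‖⁻¹ * ‖(z : T)‖ := by
          rw [norm_smul, norm_inv, norm_norm]; rfl
        rw [this, inv_mul_cancel₀ hzn.ne']
      have h := hmin hmem
      simp only [Set.mem_setOf_eq] at h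
      have hcz : (((‖(z : T)‖⁻¹ • z : V)) : T) = ‖(z : T)‖⁻¹ • (z : T) := rfl
      rw [hcz] at h
      simp only [map_smul, LinearMap.smul_apply, norm_smul, norm_inv, norm_norm] at h
      -- h : m ≤ (‖z‖⁻¹ * (‖z‖⁻¹ * ‖α z z‖)) ^ 2
      have h2 := mul_le_mul_of_nonneg_right h (by positivity : (0:ℝ) ≤ ‖(z : T)‖ ^ 4)
      have h3 : (‖(z : T)‖⁻¹ * (‖(z : T)‖⁻¹ * ‖α (z : T) (z : T)‖)) ^ 2 * ‖(z : T)‖ ^ 4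
          = ‖α (z : T) (z : T)‖ ^ 2 := by
        field_simp
      rw [hm, hA, ← h3]
      exact h2
  -- orthogonal complement of x₀ in V
  set U : Submodule ℝ V := (ℝ ∙ x₀)ᗮ with hUdef
  have hUrank : Module.finrank ℝ U = d - 1 := by
    have h2 : Module.finrank ℝ (ℝ ∙ x₀) + Module.finrank ℝ U = d := by
      rw [hUdef, Submodule.finrank_add_finrank_orthogonal]
      exact hV
    rw [finrank_span_singleton hx₀ne] at h2
    omega
  set L : U →ₗ[ℝ] W := (α (x₀ : T)).comp (V.subtype.comp U.subtype) with hL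
  have hLinj : Function.Injective L := by
    rw [← LinearMap.ker_eq_bot, Submodule.eq_bot_iff]
    intro y hy
    by_contra hyne
    rw [LinearMap.mem_ker] at hy
    set X : T := (x₀ : T) with hX
    set Y : T := ((y : V) : T) with hY
    have hXV : X ∈ V := x₀.2
    have hYV : Y ∈ V := (y : V).2
    have hB : α X Y = 0 := hy
    have hY0 : Y ≠ 0 := by
      simp only [hY, ne_eq, ZeroMemClass.coe_eq_zero]
      simpa using hyne
    have hyU : (y : V) ∈ (ℝ ∙ x₀)ᗮ := hUdef ▸ y.2
    have hXY : ⟪X, Y⟫ = 0 := by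
      have h := (Submodule.mem_orthogonal _ _).mp hyU x₀ (Submodule.mem_span_singleton_self x₀)
      rw [Submodule.coe_inner] at h
      exact h
    have hX1 : ‖X‖ = 1 := hx₀1
    -- linear independence of X, Y
    have hind : LinearIndependent ℝ ![X, Y] := by
      rw [LinearIndependent.pair_iff]
      intro s t hst
      have h1 : s = 0 := by
        have h := congrArg (fun v => ⟪X, v⟫) hst
        simp only [inner_add_right, real_inner_smul_right, hXY,
          real_inner_self_eq_norm_sq, hX1, inner_zero_right, mul_zero, add_zero,
          one_pow, mul_one] at h
        linarith
      subst h1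
      simp only [zero_smul, zero_add, smul_eq_zero] at hst
      exact ⟨rfl, hst.resolve_right hY0⟩
    have hlt := hneg X hXV Y hYV hind
    rw [hGauss, hB] at hlt
    simp only [norm_zero] at hlt
    set C : W := α Y Y with hC
    have hAC : ⟪A, C⟫ < 0 := by nlinarith [hlt]
    -- minimality along X + s • Y
    have hpoly : ∀ s : ℝ, 0 ≤ (2 * ⟪A, C⟫ - 2 * m * ‖Y‖ ^ 2) * s ^ 2
        + (‖C‖ ^ 2 - m * ‖Y‖ ^ 4) * s ^ 4 := by
      intro s
      have hz := key (x₀ + s • (y : V))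
      have hco : (((x₀ + s • (y : V)) : V) : T) = X + s • Y := rfl
      rw [hco] at hz
      have hnz : ‖X + s • Y‖ ^ 2 = 1 + s ^ 2 * ‖Y‖ ^ 2 := by
        rw [norm_add_sq_real, real_inner_smul_right, hXY, norm_smul]
        rw [hX1]
        rw [mul_pow, Real.norm_eq_abs, sq_abs]
        ring
      have hαz : α (X + s • Y) (X + s • Y) = A + (s ^ 2) • C := by
        rw [map_add, map_smul]
        simp only [LinearMap.add_apply, LinearMap.smul_apply, map_add, map_smul, hB,
          hsymm Y X, hB, smul_zero, add_zero, zero_add, smul_smul]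
        rw [← hA, ← hC, ← sq]
      rw [hαz] at hz
      have hexp : ‖A + (s ^ 2) • C‖ ^ 2 = ‖A‖ ^ 2 + 2 * s ^ 2 * ⟪A, C⟫ + s ^ 4 * ‖C‖ ^ 2 := by
        rw [norm_add_sq_real, real_inner_smul_right, norm_smul]
        rw [mul_pow, Real.norm_eq_abs, sq_abs]
        ring
      have h4 : ‖X + s • Y‖ ^ 4 = (1 + s ^ 2 * ‖Y‖ ^ 2) ^ 2 := by
        rw [show (4:ℕ) = 2 * 2 from rfl, pow_mul, hnz]
      rw [hexp, h4] at hz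
      rw [hm] at hz ⊢
      nlinarith [hz]
    have hb := quartic_coeff_nonneg _ _ hpoly
    nlinarith [hb, hAC, mul_nonneg hm0 (sq_nonneg ‖Y‖)]
  have hle := LinearMap.finrank_le_finrank_of_injective hLinj
  rw [hUrank, hW] at hle
  exact hle
end

section
/- Let V be a finite-dimensional real inner product space, W a p-dimensional inner product space, α : V × V → W symmetric bilinear, and suppose there exists a constant c > 0 such that ‖α(X,X)‖ ≥ c‖X‖² for all X in some subspace S ⊆ V with dim S > p. Then there exist linearly independent X, Y ∈ S with ⟨α(X,X),α(Y,Y)⟩ − ‖α(X,Y)‖² ≥ c²·(‖X‖²‖Y‖² − ⟨X,Y⟩²). -/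
open scoped RealInnerProductSpace

private lemma quartic_coeffs {a b c d : ℝ}
    (h : ∀ t : ℝ, 0 ≤ a * t + b * t ^ 2 + c * t ^ 3 + d * t ^ 4) :
    a = 0 ∧ 0 ≤ b := by
  have hg : Continuous fun t : ℝ => a + b * t + c * t ^ 2 + d * t ^ 3 := by continuity
  have hga : Filter.Tendsto (fun t : ℝ => a + b * t + c * t ^ 2 + d * t ^ 3) (nhds 0)
      (nhds a) := by simpa using hg.tendsto 0
  have ha0 : a = 0 := by
    have h1 : 0 ≤ a := by
      refine ge_of_tendsto (hga.mono_left nhdsWithin_le_nhds)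
        (eventually_nhdsWithin_of_forall (fun t (ht : t ∈ Set.Ioi (0:ℝ)) => ?_))
      have ht' : (0:ℝ) < t := ht
      by_contra hgt
      push_neg at hgt
      have hmul : t * (a + b * t + c * t ^ 2 + d * t ^ 3) < 0 :=
        mul_neg_of_pos_of_neg ht' hgt
      nlinarith [h t]
    have h2 : a ≤ 0 := by
      refine le_of_tendsto (f := fun t : ℝ => a + b * t + c * t ^ 2 + d * t ^ 3)
        (hga.mono_left nhdsWithin_le_nhds)
        (eventually_nhdsWithin_of_forall (fun t (ht : t ∈ Set.Iio (0:ℝ)) => ?_))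
      have ht' : t < 0 := ht
      by_contra hgt
      push_neg at hgt
      have hmul : t * (a + b * t + c * t ^ 2 + d * t ^ 3) < 0 :=
        mul_neg_of_neg_of_pos ht' hgt
      nlinarith [h t]
    linarith
  refine ⟨ha0, ?_⟩
  have hg2 : Filter.Tendsto (fun t : ℝ => b + c * t + d * t ^ 2) (nhds 0) (nhds b) := by
    have : Continuous fun t : ℝ => b + c * t + d * t ^ 2 := by continuity
    simpa using this.tendsto 0
  refine ge_of_tendsto (hg2.mono_left nhdsWithin_le_nhds)
    (eventually_nhdsWithin_of_forall (fun t (ht : t ∈ ({0}ᶜ : Set ℝ)) => ?_))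
  have ht' : t ≠ 0 := ht
  have h1 := h t
  rw [ha0] at h1
  have ht2 : 0 < t ^ 2 := by positivity
  nlinarith [h1]

set_option maxHeartbeats 1000000 in
/-- Otsuki's Lemma in the form used in the proofs: if a symmetric bilinear form
`α : V × V → W` satisfies `‖α(X,X)‖ ≥ c‖X‖²` (with `c > 0`) for all `X` in a subspace
`S` of dimension exceeding `p = dim W`, then some plane of `S` has extrinsic curvature
at least `c²`: there are linearly independent `X, Y ∈ S` with
`⟪α(X,X), α(Y,Y)⟫ − ‖α(X,Y)‖² ≥ c²·(‖X‖²‖Y‖² − ⟪X,Y⟫²)`. -/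
theorem otsuki_positive_curvature_plane
    {V W : Type*} [NormedAddCommGroup V] [InnerProductSpace ℝ V]
    [NormedAddCommGroup W] [InnerProductSpace ℝ W]
    [FiniteDimensional ℝ V] [FiniteDimensional ℝ W]
    (p : ℕ) (hp : Module.finrank ℝ W = p)
    (α : V →ₗ[ℝ] V →ₗ[ℝ] W) (hsymm : ∀ X Y : V, α X Y = α Y X)
    (c : ℝ) (hc : 0 < c)
    (S : Submodule ℝ V) (hS : p < Module.finrank ℝ S)
    (hlow : ∀ X ∈ S, c * ‖X‖ ^ 2 ≤ ‖α X X‖) :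
    ∃ X ∈ S, ∃ Y ∈ S, LinearIndependent ℝ ![X, Y] ∧
      c ^ 2 * (‖X‖ ^ 2 * ‖Y‖ ^ 2 - ⟪X, Y⟫ ^ 2) ≤
        ⟪α X X, α Y Y⟫ - ‖α X Y‖ ^ 2 := by
  classical
  -- continuity of x ↦ ‖α x x‖²
  set αc : V →ₗ[ℝ] (V →L[ℝ] W) :=
    (LinearMap.toContinuousLinearMap : (V →ₗ[ℝ] W) ≃ₗ[ℝ] (V →L[ℝ] W)).toLinearMap ∘ₗ α with hαcdef
  have hαceq : ∀ x y : V, αc x y = α x y := fun x y => rfl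
  have hαc : Continuous αc := αc.continuous_of_finiteDimensional
  have hcont : Continuous fun x : V => ‖α x x‖ ^ 2 := by
    have h1 : Continuous fun x : V => αc x x := hαc.clm_apply continuous_id
    exact h1.norm.pow 2
  -- compact nonempty constraint set
  have hSclosed : IsClosed (S : Set V) := S.closed_of_finiteDimensional
  have hK : IsCompact ((S : Set V) ∩ Metric.sphere 0 1) :=
    (isCompact_sphere (0:V) 1).inter_left hSclosed
  have hSne : ∃ x : V, x ∈ S ∧ x ≠ 0 := by
    refine Submodule.exists_mem_ne_zero_of_ne_bot (fun hbot => ?_)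
    rw [hbot] at hS; simp at hS
  obtain ⟨x, hxS, hxne⟩ := hSne
  have hne : ((S : Set V) ∩ Metric.sphere 0 1).Nonempty := by
    refine ⟨(‖x‖⁻¹ : ℝ) • x, S.smul_mem _ hxS, ?_⟩
    rw [mem_sphere_zero_iff_norm]
    exact norm_smul_inv_norm hxne
  obtain ⟨X₀, hX₀mem, hmin⟩ := hK.exists_isMinOn hne hcont.continuousOn
  obtain ⟨hX₀S, hX₀sph⟩ := hX₀mem
  have hX₀n : ‖X₀‖ = 1 := by simpa [mem_sphere_zero_iff_norm] using hX₀sph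
  have hX₀ne : X₀ ≠ 0 := by intro h; rw [h] at hX₀n; simp at hX₀n
  set A := α X₀ X₀ with hA
  set m := ‖A‖ ^ 2 with hm
  have hcA : c ≤ ‖A‖ := by
    have := hlow X₀ hX₀S; rwa [hX₀n, one_pow, mul_one] at this
  have hmc : c ^ 2 ≤ m := by nlinarith
  have hAne : A ≠ 0 := by
    intro h; rw [h] at hcA; simp at hcA; linarith
  -- scaled minimality
  have hmin' : ∀ z ∈ S, m * ‖z‖ ^ 4 ≤ ‖α z z‖ ^ 2 := by
    intro z hz
    rcases eq_or_ne z 0 with rfl | hzne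
    · simp
    · have h1 : (‖z‖⁻¹ : ℝ) • z ∈ (S : Set V) ∩ Metric.sphere 0 1 := by
        refine ⟨S.smul_mem _ hz, ?_⟩
        rw [mem_sphere_zero_iff_norm]
        exact norm_smul_inv_norm hzne
      have h2 := hmin h1
      simp only [Set.mem_setOf_eq] at h2
      have h3 : α ((‖z‖⁻¹ : ℝ) • z) ((‖z‖⁻¹ : ℝ) • z) = (‖z‖⁻¹ * ‖z‖⁻¹) • α z z := by
        simp [map_smul, smul_smul]
      have h4 : ‖α ((‖z‖⁻¹ : ℝ) • z) ((‖z‖⁻¹ : ℝ) • z)‖ ^ 2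
          = (‖z‖⁻¹ * ‖z‖⁻¹) ^ 2 * ‖α z z‖ ^ 2 := by
        rw [h3, norm_smul]
        have : |‖z‖⁻¹ * ‖z‖⁻¹| = ‖z‖⁻¹ * ‖z‖⁻¹ := abs_of_nonneg (by positivity)
        rw [Real.norm_eq_abs, this]; ring
      have h5 : m ≤ (‖z‖⁻¹ * ‖z‖⁻¹) ^ 2 * ‖α z z‖ ^ 2 := by
        rw [← h4]; exact h2
      have hz0 : (0:ℝ) < ‖z‖ := norm_pos_iff.mpr hzne
      have := mul_le_mul_of_nonneg_left h5 (le_of_lt (by positivity : (0:ℝ) < ‖z‖ ^ 4))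
      calc m * ‖z‖ ^ 4 = ‖z‖ ^ 4 * m := by ring
        _ ≤ ‖z‖ ^ 4 * ((‖z‖⁻¹ * ‖z‖⁻¹) ^ 2 * ‖α z z‖ ^ 2) := this
        _ = ‖α z z‖ ^ 2 := by field_simp
  -- first and second order conditions
  have key : ∀ Y ∈ S, ⟪X₀, Y⟫ = 0 →
      ⟪A, α X₀ Y⟫ = 0 ∧ m * ‖Y‖ ^ 2 ≤ ⟪A, α Y Y⟫ + 2 * ‖α X₀ Y‖ ^ 2 := by
    intro Y hY hperp
    set B := α X₀ Y with hB
    set C := α Y Y with hC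
    have hpoly : ∀ t : ℝ, 0 ≤ (4 * ⟪A, B⟫) * t
        + (2 * ⟪A, C⟫ + 4 * ‖B‖ ^ 2 - 2 * m * ‖Y‖ ^ 2) * t ^ 2
        + (4 * ⟪B, C⟫) * t ^ 3 + (‖C‖ ^ 2 - m * ‖Y‖ ^ 4) * t ^ 4 := by
      intro t
      have hz : X₀ + t • Y ∈ S := S.add_mem hX₀S (S.smul_mem t hY)
      have hnorm : ‖X₀ + t • Y‖ ^ 2 = 1 + t ^ 2 * ‖Y‖ ^ 2 := by
        rw [norm_add_sq_real, real_inner_smul_right, norm_smul, hperp, hX₀n]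
        rw [Real.norm_eq_abs, mul_pow, sq_abs]
        ring
      have hα : α (X₀ + t • Y) (X₀ + t • Y) = A + (2 * t) • B + (t ^ 2) • C := by
        rw [hA, hB, hC]
        simp only [map_add, map_smul, LinearMap.add_apply, LinearMap.smul_apply,
          hsymm Y X₀]
        module
      have h1 := hmin' _ hz
      have h2 : ‖X₀ + t • Y‖ ^ 4 = (1 + t ^ 2 * ‖Y‖ ^ 2) ^ 2 := by
        rw [show (4:ℕ) = 2 * 2 from rfl, pow_mul, hnorm]
      rw [h2, hα] at h1
      have h3 : ‖A + (2 * t) • B + (t ^ 2) • C‖ ^ 2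
          = ‖A‖ ^ 2 + 4 * ⟪A, B⟫ * t + (2 * ⟪A, C⟫ + 4 * ‖B‖ ^ 2) * t ^ 2
            + 4 * ⟪B, C⟫ * t ^ 3 + ‖C‖ ^ 2 * t ^ 4 := by
        rw [← real_inner_self_eq_norm_sq, ← real_inner_self_eq_norm_sq,
          ← real_inner_self_eq_norm_sq, ← real_inner_self_eq_norm_sq]
        simp only [inner_add_left, inner_add_right, real_inner_smul_left,
          real_inner_smul_right]
        rw [real_inner_comm B A, real_inner_comm C A, real_inner_comm C B]
        ring
      rw [h3] at h1
      rw [hm] at h1 ⊢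
      linarith [h1]
    obtain ⟨ha, hb⟩ := quartic_coeffs hpoly
    exact ⟨by linarith, by linarith⟩
  -- dimension count: find Y in S ⊥ X₀ with α X₀ Y = 0
  set U : Submodule ℝ V := S ⊓ (ℝ ∙ X₀)ᗮ with hUdef
  have hUperp : ∀ y : V, y ∈ U → ⟪X₀, y⟫ = 0 := by
    intro y hy
    exact Submodule.mem_orthogonal_singleton_iff_inner_right.mp hy.2
  have hUrank : p ≤ Module.finrank ℝ U := by
    have h1 := Submodule.finrank_sup_add_finrank_inf_eq S ((ℝ ∙ X₀)ᗮ)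
    rw [← hUdef] at h1
    have h2 := Submodule.finrank_add_finrank_orthogonal (K := (ℝ ∙ X₀))
    have h3 : Module.finrank ℝ (ℝ ∙ X₀) = 1 := finrank_span_singleton hX₀ne
    have h4 : Module.finrank ℝ ↥(S ⊔ (ℝ ∙ X₀)ᗮ) ≤ Module.finrank ℝ V :=
      Submodule.finrank_le _
    have h5 : Module.finrank ℝ S ≤ Module.finrank ℝ V := Submodule.finrank_le _
    omega
  set W' : Submodule ℝ W := (ℝ ∙ A)ᗮ with hW'def
  have hW'rank : Module.finrank ℝ W' + 1 = p := by
    have h2 := Submodule.finrank_add_finrank_orthogonal (K := (ℝ ∙ A))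
    rw [← hW'def] at h2
    have h3 : Module.finrank ℝ (ℝ ∙ A) = 1 := finrank_span_singleton hAne
    omega
  have hmemW' : ∀ y : U, α X₀ (y : V) ∈ W' := by
    intro y
    rw [hW'def, Submodule.mem_orthogonal_singleton_iff_inner_right]
    exact (key (y : V) y.2.1 (hUperp _ y.2)).1
  set L : U →ₗ[ℝ] W' := LinearMap.codRestrict W' (α X₀ ∘ₗ U.subtype)
    (fun y => hmemW' y) with hLdef
  have hnotinj : ¬ Function.Injective L := by
    intro hinj
    have := LinearMap.finrank_le_finrank_of_injective hinj
    omega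
  have hker : LinearMap.ker L ≠ ⊥ := fun h => hnotinj (LinearMap.ker_eq_bot.mp h)
  obtain ⟨y, hyker, hyne⟩ := Submodule.exists_mem_ne_zero_of_ne_bot hker
  have hyS : (y : V) ∈ S := y.2.1
  have hyperp : ⟪X₀, (y : V)⟫ = 0 := hUperp _ y.2
  have hB0 : α X₀ (y : V) = 0 := by
    have h := LinearMap.mem_ker.mp hyker
    have h2 := congrArg (Subtype.val) h
    exact h2
  have hyne' : (y : V) ≠ 0 := fun h => hyne (Subtype.ext h)
  refine ⟨X₀, hX₀S, (y : V), hyS, ?_, ?_⟩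
  · rw [linearIndependent_fin2]
    refine ⟨by simpa using hyne', fun a heq => ?_⟩
    simp only [Matrix.cons_val_one, Matrix.head_cons, Matrix.cons_val_zero] at heq
    have h1 : ⟪X₀, a • (y : V)⟫ = ⟪X₀, X₀⟫ := by rw [heq]
    rw [real_inner_smul_right, hyperp, real_inner_self_eq_norm_sq, hX₀n] at h1
    simp at h1
  · have h2 := (key (y : V) hyS hyperp).2
    rw [hB0] at h2
    simp only [norm_zero] at h2
    rw [hyperp, hX₀n, hB0]
    simp only [norm_zero]
    nlinarith [h2, hmc, sq_nonneg ‖(y : V)‖]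
end
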